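/- arXiv:1303.3541 — 3 statements merged into one kernel-verified Lean document; each statement's English description precedes it below -/
import Mathlib

section
/- Let n ≥ 2 be an integer and let λ, ν ∈ ℂ satisfy Re(λ−ν) > 0 and Re(λ+ν) > n−1. Then the kernel k_{λ,ν}, i.e. the function ℝⁿ → ℂ given by (x, xₙ) ↦ |xₙ|^{λ+ν−n} (|x|² + xₙ²)^{−ν}, is locally integrable on ℝⁿ with respect to Lebesgue measure. -/
/-!
Put `a = Re(λ+ν)`, `b = Re ν` and `β = max b 0`. Where `x ≠ 0` and `xₙ ≠ 0`,
`|k| = |xₙ|^(a-n) (|x|² + xₙ²)^(-b)`. Splitting `(|x|² + xₙ²)^(-β)` with `A^θ B^(1-θ) ≤ A + B`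
and bounding `(|x|² + xₙ²)^(β-b)` by `(1 + |x|²)^(β-b) (1 + xₙ²)^(β-b)` dominates `|k|` by
`|x|^(-2θβ) |xₙ|^(a-n-2(1-θ)β)` times a continuous function. For `θ = (n-1)/a` the hypotheses
`a > 2b` and `a > n-1` put each exponent above minus the dimension of its factor, so the
dominating product is locally integrable.
-/

open MeasureTheory

/-- The kernel `k_{λ,ν}(x, xₙ) = |xₙ|^{λ+ν−n} (|x|² + xₙ²)^{−ν}` on
`ℝⁿ = ℝⁿ⁻¹ × ℝ`, assigned the value `0` on the null set `{xₙ = 0}`. -/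
noncomputable def kker (n : ℕ) (lam nu : ℂ) :
    EuclideanSpace ℝ (Fin (n - 1)) × ℝ → ℂ := fun p =>
  if p.2 = 0 then 0
  else ((|p.2| : ℝ) : ℂ) ^ (lam + nu - (n : ℂ)) *
    ((‖p.1‖ ^ 2 + p.2 ^ 2 : ℝ) : ℂ) ^ (-nu)

theorem MeasureTheory.LocallyIntegrable.mul_prod {X Y L : Type*} [TopologicalSpace X]
    [MeasurableSpace X] [TopologicalSpace Y] [MeasurableSpace Y] [NormedRing L]
    {μ : Measure X} {ν : Measure Y} [SFinite μ] [SFinite ν] {f : X → L} {g : Y → L}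
    (hf : LocallyIntegrable f μ) (hg : LocallyIntegrable g ν) :
    LocallyIntegrable (fun z : X × Y => f z.1 * g z.2) (μ.prod ν) := by
  rintro ⟨x, y⟩
  obtain ⟨U, hU, hfU⟩ := hf x
  obtain ⟨V, hV, hgV⟩ := hg y
  refine ⟨U ×ˢ V, prod_mem_nhds hU hV, ?_⟩
  rw [IntegrableOn, ← Measure.prod_restrict]
  exact hfU.mul_prod hgV

theorem MeasureTheory.Measure.ae_fst_ne_and_snd_ne {X Y : Type*} [MeasurableSpace X]
    [MeasurableSpace Y] (μ : Measure X) (ν : Measure Y) [SFinite ν] [NullSingletonClass μ]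
    [NullSingletonClass ν] (x : X) (y : Y) :
    ∀ᵐ z ∂μ.prod ν, z.1 ≠ x ∧ z.2 ≠ y := by
  filter_upwards [Measure.quasiMeasurePreserving_fst.ae (μ.ae_ne x),
    Measure.quasiMeasurePreserving_snd.ae (ν.ae_ne y)] with z hx hy
  exact ⟨hx, hy⟩

namespace Real

theorem rpow_neg_add_le_mul {A B s θ : ℝ} (hA : 0 < A) (hB : 0 < B) (hs : 0 ≤ s)
    (hθ₀ : 0 ≤ θ) (hθ₁ : θ ≤ 1) :
    (A + B) ^ (-s) ≤ A ^ (-(θ * s)) * B ^ (-((1 - θ) * s)) := by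
  have hAB : 0 < A + B := by positivity
  have hprod : A ^ (θ * s) * B ^ ((1 - θ) * s) ≤ (A + B) ^ s :=
    calc A ^ (θ * s) * B ^ ((1 - θ) * s)
        ≤ (A + B) ^ (θ * s) * (A + B) ^ ((1 - θ) * s) := by gcongr <;> linarith
      _ = (A + B) ^ s := by rw [← rpow_add hAB]; ring_nf
  rw [rpow_neg hAB.le, rpow_neg hA.le, rpow_neg hB.le, ← mul_inv]
  exact inv_anti₀ (by positivity) hprod

theorem add_rpow_le_one_add_rpow_mul {A B γ : ℝ} (hA : 0 ≤ A) (hB : 0 ≤ B) (hγ : 0 ≤ γ) :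
    (A + B) ^ γ ≤ (1 + A) ^ γ * (1 + B) ^ γ := by
  rw [← mul_rpow (by positivity) (by positivity)]
  gcongr
  nlinarith

end Real

section NormWeight

variable {E F : Type*} [NormedAddCommGroup E] [NormedAddCommGroup F]

noncomputable def normWeight (p γ : ℝ) (x : E) : ℝ :=
  ‖x‖ ^ p * (1 + ‖x‖ ^ 2) ^ γ

theorem locallyIntegrable_norm_rpow [NormedSpace ℝ E] [FiniteDimensional ℝ E]
    [MeasurableSpace E] [BorelSpace E] (μ : Measure E) [μ.IsAddHaarMeasure]
    (hE : 1 ≤ Module.finrank ℝ E) {p : ℝ} (hp : -(Module.finrank ℝ E : ℝ) < p) :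
    LocallyIntegrable (fun x : E => ‖x‖ ^ p) μ :=
  locallyIntegrable_of_norm_le_rpow (C := 1) (α := -p) hE (by linarith)
    (.of_forall fun x => by simp [abs_of_nonneg (Real.rpow_nonneg (norm_nonneg x) p)])
    (measurable_norm.pow_const p).aestronglyMeasurable

theorem locallyIntegrable_normWeight [NormedSpace ℝ E] [FiniteDimensional ℝ E]
    [MeasurableSpace E] [BorelSpace E] (μ : Measure E) [μ.IsAddHaarMeasure]
    (hE : 1 ≤ Module.finrank ℝ E) {p : ℝ} (hp : -(Module.finrank ℝ E : ℝ) < p) (γ : ℝ) :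
    LocallyIntegrable (normWeight p γ) μ :=
  (locallyIntegrable_norm_rpow μ hE hp).mul_continuous
    (continuous_const.add (continuous_norm.pow 2) |>.rpow_const fun x =>
      Or.inl (by positivity : (0 : ℝ) < 1 + ‖x‖ ^ 2).ne')

theorem rpow_neg_norm_sq_add_norm_sq_le {x : E} {y : F} (hx : x ≠ 0) (hy : y ≠ 0) (b : ℝ)
    {θ : ℝ} (hθ₀ : 0 ≤ θ) (hθ₁ : θ ≤ 1) :
    (‖x‖ ^ 2 + ‖y‖ ^ 2) ^ (-b) ≤
      normWeight (-(2 * (θ * max b 0))) (max b 0 - b) x *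
        normWeight (-(2 * ((1 - θ) * max b 0))) (max b 0 - b) y := by
  set β := max b 0
  have hx2 : 0 < ‖x‖ ^ 2 := by positivity
  have hy2 : 0 < ‖y‖ ^ 2 := by positivity
  have hsq : ∀ {u : ℝ} (c : ℝ), 0 ≤ u → (u ^ 2) ^ (-c) = u ^ (-(2 * c)) := fun c hu => by
    rw [← Real.rpow_two, ← Real.rpow_mul hu, mul_neg]
  calc (‖x‖ ^ 2 + ‖y‖ ^ 2) ^ (-b)
      = (‖x‖ ^ 2 + ‖y‖ ^ 2) ^ (-β) * (‖x‖ ^ 2 + ‖y‖ ^ 2) ^ (β - b) := by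
        rw [← Real.rpow_add (by positivity)]; ring_nf
    _ ≤ ((‖x‖ ^ 2) ^ (-(θ * β)) * (‖y‖ ^ 2) ^ (-((1 - θ) * β))) *
          ((1 + ‖x‖ ^ 2) ^ (β - b) * (1 + ‖y‖ ^ 2) ^ (β - b)) := by
        exact mul_le_mul (Real.rpow_neg_add_le_mul hx2 hy2 (le_max_right b 0) hθ₀ hθ₁)
          (Real.add_rpow_le_one_add_rpow_mul hx2.le hy2.le (by simp [β]))
          (by positivity) (by positivity)
    _ = _ := by
        rw [hsq _ (norm_nonneg x), hsq _ (norm_nonneg y), normWeight, normWeight]; ring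

end NormWeight

theorem norm_kker (n : ℕ) (lam nu : ℂ) (x : EuclideanSpace ℝ (Fin (n - 1))) {t : ℝ}
    (ht : t ≠ 0) :
    ‖kker n lam nu (x, t)‖ = |t| ^ ((lam + nu).re - n) * (‖x‖ ^ 2 + t ^ 2) ^ (-nu.re) := by
  have hS : 0 < ‖x‖ ^ 2 + t ^ 2 := by positivity
  simp only [kker, if_neg ht, norm_mul, Complex.norm_cpow_eq_rpow_re_of_pos (abs_pos.2 ht),
    Complex.norm_cpow_eq_rpow_re_of_pos hS]
  simp

theorem norm_kker_le (n : ℕ) (lam nu : ℂ) {θ : ℝ} (hθ₀ : 0 ≤ θ) (hθ₁ : θ ≤ 1)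
    {x : EuclideanSpace ℝ (Fin (n - 1))} {t : ℝ} (hx : x ≠ 0) (ht : t ≠ 0) :
    ‖kker n lam nu (x, t)‖ ≤
      normWeight (-(2 * (θ * max nu.re 0))) (max nu.re 0 - nu.re) x *
        normWeight ((lam + nu).re - n - 2 * ((1 - θ) * max nu.re 0)) (max nu.re 0 - nu.re) t := by
  have key := rpow_neg_norm_sq_add_norm_sq_le hx ht nu.re hθ₀ hθ₁
  rw [Real.norm_eq_abs, sq_abs] at key
  rw [norm_kker n lam nu x ht]
  calc |t| ^ ((lam + nu).re - n) * (‖x‖ ^ 2 + t ^ 2) ^ (-nu.re)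
      ≤ |t| ^ ((lam + nu).re - n) * (normWeight _ _ x * normWeight _ _ t) := by gcongr
    _ = _ := by
      simp only [normWeight, Real.norm_eq_abs, sq_abs]
      rw [sub_eq_add_neg _ (2 * _), Real.rpow_add (abs_pos.2 ht)]
      ring

theorem measurable_kker (n : ℕ) (lam nu : ℂ) : Measurable (kker n lam nu) :=
  Measurable.ite (measurable_snd (measurableSet_singleton 0)) measurable_const (by fun_prop)

theorem kernel_locallyIntegrable (n : ℕ) (hn : 2 ≤ n) (lam nu : ℂ)
    (h1 : 0 < (lam - nu).re) (h2 : (n : ℝ) - 1 < (lam + nu).re) :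
    LocallyIntegrable (kker n lam nu) volume := by
  set E := EuclideanSpace ℝ (Fin (n - 1))
  set a := (lam + nu).re
  set β := max nu.re 0
  set θ := ((n : ℝ) - 1) / a
  have : Nonempty (Fin (n - 1)) := ⟨⟨0, by omega⟩⟩
  have hdim : (Module.finrank ℝ E : ℝ) = n - 1 := by
    rw [finrank_euclideanSpace_fin, Nat.cast_sub (by omega), Nat.cast_one]
  have hn1 : (1 : ℝ) ≤ n - 1 := by
    have : (2 : ℝ) ≤ n := by exact_mod_cast hn
    linarith
  have ha : 0 < a := by linarith
  have hgap : 0 < a - 2 * β := by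
    have : (lam - nu).re = a - 2 * nu.re := by simp only [a, Complex.sub_re, Complex.add_re]; ring
    have : β < a / 2 := max_lt (by linarith) (by linarith)
    linarith
  have hθa : θ * a = n - 1 := div_mul_cancel₀ _ ha.ne'
  have hθ₀ : 0 < θ := div_pos (by linarith) ha
  have hθ₁ : θ < 1 := (div_lt_one ha).2 h2
  have hE : 1 ≤ Module.finrank ℝ E := by exact_mod_cast hdim ▸ hn1
  have hdom := (locallyIntegrable_normWeight volume hE (p := -(2 * (θ * β)))
    (by nlinarith [mul_pos hθ₀ hgap]) (β - nu.re)).mul_prod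
    (locallyIntegrable_normWeight volume (Module.finrank_self ℝ).ge
      (p := a - n - 2 * ((1 - θ) * β))
      (by rw [Module.finrank_self, Nat.cast_one]; nlinarith [mul_pos (sub_pos.2 hθ₁) hgap])
      (β - nu.re))
  rw [Measure.volume_eq_prod]
  refine hdom.mono (measurable_kker n lam nu).aestronglyMeasurable ?_
  filter_upwards [Measure.ae_fst_ne_and_snd_ne volume volume 0 0] with ⟨x, t⟩ ⟨hx, ht⟩
  exact (norm_kker_le n lam nu hθ₀.le hθ₁.le hx ht).trans (Real.le_norm_self _)
end

section
/- Let n ≥ 2 be an integer, λ ∈ ℂ, l ∈ ℕ, and set ν = λ + 2l and μ = λ − (n−1)/2. Let F be the polynomial in the n variables ζ₁, …, ζₙ over ℂ given by F = C̃_{2l}^μ(−(ζ₁² + ⋯ + ζ_{n−1}²), ζₙ). Then for every j with 1 ≤ j ≤ n−1, the polynomial identity ν·(∂F/∂ζ_j) − (1/2)·Σ_{i=1}^{n} ∂²(ζ_j · F)/∂ζᵢ² = 0 holds. (These are the fundamental differential equations (ν ∂/∂ζ_j − ½ Δ_{ℝⁿ} ζ_j)F = 0 of the F-method, satisfied by the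 Fourier symbol of the conformally covariant differential operator C̃_{λ,ν}.) -/
/-!
Write `S = ζ₁² + ⋯ + ζ_{n-1}²` and `t = ζₙ`. Absorbing the signs,
`F = ∑_{p+q=l} a_{p,q} S^p t^{2q}`. Since `Δ(ζⱼ G) = ζⱼ ΔG + 2 ∂ⱼG`, the operator acts as
`(ν - 1)∂ⱼ - ½ ζⱼ Δ`, and sends `S^p t^{2q}` to `ζⱼ` times a combination of `S^{p-1} t^{2q}`
and `S^p t^{2q-2}`. Summed over `p + q = l` these contributions telescope away exactly when
`a_{p+1,q} (p+1) (2ν - 2p - n - 1) = a_{p,q+1} (q+1) (2q+1)`, which for the Gegenbauer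
coefficients is the Pochhammer identity `(x)_{q+1} = (x)_q (x + q)`.
-/

open Finset MvPolynomial

variable {σ : Type*}

theorem Finset.Nat.sum_antidiagonal_sub_eq_zero {M : Type*} [AddCommGroup M] {l : ℕ}
    (u v : ℕ → ℕ → M) (hu : ∀ q, u 0 q = 0) (hv : ∀ p, v p 0 = 0)
    (huv : ∀ p q, p + q + 1 = l → u (p + 1) q = v p (q + 1)) :
    ∑ x ∈ antidiagonal l, (u x.1 x.2 - v x.1 x.2) = 0 := by
  rcases l with _ | l
  · simp [hu, hv]
  rw [sum_sub_distrib, Nat.sum_antidiagonal_succ, Nat.sum_antidiagonal_succ', hu, hv, zero_add,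
    zero_add, sub_eq_zero]
  exact sum_congr rfl fun x hx => huv _ _ (by rw [mem_antidiagonal.1 hx])

section Laplacian

variable {R : Type*} [CommSemiring R]

noncomputable def laplacian (s : Finset σ) : MvPolynomial σ R →ₗ[R] MvPolynomial σ R :=
  ∑ i ∈ s, (pderiv i).toLinearMap ∘ₗ (pderiv i).toLinearMap

theorem laplacian_apply (s : Finset σ) (p : MvPolynomial σ R) :
    laplacian s p = ∑ i ∈ s, pderiv i (pderiv i p) := by
  simp [laplacian, LinearMap.sum_apply]

theorem laplacian_X_mul {s : Finset σ} {k : σ} (hk : k ∈ s) (p : MvPolynomial σ R) :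
    laplacian s (X k * p) = X k * laplacian s p + 2 * pderiv k p := by
  have hterm (i : σ) : pderiv i (pderiv i (X k * p)) =
      X k * pderiv i (pderiv i p) + 2 * (pderiv i (X k) * pderiv i p) := by
    rcases eq_or_ne i k with rfl | hik
    · simp only [pderiv_mul, pderiv_X_self, map_add, one_mul]
      ring
    · simp [pderiv_X_of_ne hik.symm]
  have hcross : ∑ i ∈ s, pderiv i (X k) * pderiv i p = pderiv k p := by
    rw [sum_eq_single_of_mem k hk fun i _ hik => by rw [pderiv_X_of_ne hik.symm, zero_mul],
      pderiv_X_self, one_mul]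
  simp only [laplacian_apply, hterm, sum_add_distrib, ← mul_sum, hcross]

noncomputable def sumSq (s : Finset σ) : MvPolynomial σ R := ∑ i ∈ s, X i ^ 2

theorem pderiv_sumSq_of_mem {s : Finset σ} {k : σ} (hk : k ∈ s) :
    pderiv k (sumSq s : MvPolynomial σ R) = 2 * X k := by
  rw [sumSq, map_sum, sum_eq_single_of_mem k hk fun i _ hik => by
    rw [pderiv_pow, pderiv_X_of_ne hik, mul_zero]]
  simp [mul_comm]

theorem pderiv_sumSq_of_notMem {s : Finset σ} {k : σ} (hk : k ∉ s) :
    pderiv k (sumSq s : MvPolynomial σ R) = 0 := by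
  refine (map_sum _ _ _).trans (sum_eq_zero fun i hi => ?_)
  rw [pderiv_pow, pderiv_X_of_ne (ne_of_mem_of_not_mem hi hk), mul_zero]

theorem pderiv_sumSq_pow_of_mem {s : Finset σ} {k : σ} (hk : k ∈ s) (a : ℕ) :
    pderiv k (sumSq s ^ a : MvPolynomial σ R) =
      ((2 * a : ℕ) : MvPolynomial σ R) * X k * sumSq s ^ (a - 1) := by
  rw [pderiv_pow, pderiv_sumSq_of_mem hk]
  push_cast
  ring

theorem laplacian_sumSq_pow (s : Finset σ) (a : ℕ) :
    laplacian s (sumSq s ^ a : MvPolynomial σ R) =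
      ((2 * a * (2 * (a - 1) + #s) : ℕ) : MvPolynomial σ R) * sumSq s ^ (a - 1) := by
  have hterm (i : σ) (hi : i ∈ s) : pderiv i (pderiv i (sumSq s ^ a : MvPolynomial σ R)) =
      ((4 * a * (a - 1) : ℕ) : MvPolynomial σ R) * X i ^ 2 * sumSq s ^ (a - 1 - 1) +
        ((2 * a : ℕ) : MvPolynomial σ R) * sumSq s ^ (a - 1) := by
    rw [pderiv_sumSq_pow_of_mem hi, pderiv_mul, pderiv_mul, pderiv_sumSq_pow_of_mem hi]
    simp only [pderiv_X_self, Derivation.map_natCast]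
    push_cast
    ring
  rw [laplacian_apply, sum_congr rfl hterm, sum_add_distrib, ← sum_mul, ← sum_mul, ← mul_sum,
    ← sumSq, sum_const, nsmul_eq_mul]
  rcases a with _ | _ | a
  · simp
  · simp [mul_comm]
  · simp only [Nat.add_sub_cancel, pow_succ]
    push_cast
    ring

theorem pderiv_pderiv_X_pow (i : σ) (b : ℕ) :
    pderiv i (pderiv i (X i ^ b : MvPolynomial σ R)) =
      ((b * (b - 1) : ℕ) : MvPolynomial σ R) * X i ^ (b - 2) := by
  simp only [pderiv_pow, pderiv_X_self, mul_one, pderiv_mul, Derivation.map_natCast, zero_mul,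
    zero_add]
  rw [Nat.sub_sub]
  push_cast
  ring

theorem laplacian_insert_sumSq_pow_mul_X_pow [DecidableEq σ] {s : Finset σ} {m : σ} (hm : m ∉ s)
    (a b : ℕ) :
    laplacian (insert m s) (sumSq s ^ a * X m ^ b : MvPolynomial σ R) =
      ((2 * a * (2 * (a - 1) + #s) : ℕ) : MvPolynomial σ R) * sumSq s ^ (a - 1) * X m ^ b +
        ((b * (b - 1) : ℕ) : MvPolynomial σ R) * sumSq s ^ a * X m ^ (b - 2) := by
  have hm' : pderiv m (pderiv m (sumSq s ^ a * X m ^ b : MvPolynomial σ R)) =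
      sumSq s ^ a * pderiv m (pderiv m (X m ^ b)) := by
    simp [pderiv_sumSq_of_notMem hm]
  have hs (i : σ) (hi : i ∈ s) : pderiv i (pderiv i (sumSq s ^ a * X m ^ b : MvPolynomial σ R)) =
      pderiv i (pderiv i (sumSq s ^ a)) * X m ^ b := by
    simp [pderiv_X_of_ne (ne_of_mem_of_not_mem hi hm).symm, mul_comm]
  rw [laplacian_apply, sum_insert hm, hm', sum_congr rfl hs, ← sum_mul, ← laplacian_apply,
    laplacian_sumSq_pow, pderiv_pderiv_X_pow]
  ring

end Laplacian

section FundamentalOperator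

variable {K : Type*} [Field K]

noncomputable def fundamentalOperator (s : Finset σ) (k : σ) (ν : K) :
    MvPolynomial σ K →ₗ[K] MvPolynomial σ K :=
  ν • (pderiv k).toLinearMap - (1 / 2 : K) • laplacian s ∘ₗ LinearMap.mulLeft K (X k)

theorem fundamentalOperator_apply (s : Finset σ) (k : σ) (ν : K) (F : MvPolynomial σ K) :
    fundamentalOperator s k ν F = C ν * pderiv k F - C (1 / 2) * laplacian s (X k * F) := by
  simp [fundamentalOperator, C_mul']

variable [NeZero (2 : K)] [DecidableEq σ] {s : Finset σ} {m k : σ}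

theorem fundamentalOperator_sumSq_pow_mul_X_pow (hm : m ∉ s) (hk : k ∈ s) (ν : K) (p q : ℕ) :
    fundamentalOperator (insert m s) k ν (sumSq s ^ p * X m ^ (2 * q)) =
      X k * (C ((p : K) * (2 * ν - 2 * p - #s)) * (sumSq s ^ (p - 1) * X m ^ (2 * q)) -
        C ((q : K) * (2 * q - 1)) * (sumSq s ^ p * X m ^ (2 * q - 2))) := by
  have hkm : m ≠ k := (ne_of_mem_of_not_mem hk hm).symm
  have hhalf : (C (1 / 2 : K) : MvPolynomial σ K) * 2 = 1 := by
    rw [← map_ofNat C, ← map_mul, one_div_mul_cancel two_ne_zero, map_one]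
  -- `hp` and `hq` dispose of the truncated subtractions `p - 1` and `2q - 1` under the casts.
  have hp : (p : MvPolynomial σ K) * ((p - 1 : ℕ) : MvPolynomial σ K) = p * (p - 1) := by
    rcases p with _ | p <;> simp
  have hq : (2 * q : MvPolynomial σ K) * ((2 * q - 1 : ℕ) : MvPolynomial σ K) =
      2 * q * (2 * q - 1) := by
    rcases q with _ | q
    · simp
    · rw [Nat.cast_sub (by omega)]; push_cast; ring
  rw [fundamentalOperator_apply, laplacian_X_mul (mem_insert_of_mem hk),
    laplacian_insert_sumSq_pow_mul_X_pow hm, pderiv_mul, pderiv_sumSq_pow_of_mem hk, pderiv_pow,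
    pderiv_X_of_ne hkm]
  simp only [map_mul, map_sub, map_one, map_natCast, map_ofNat]
  push_cast
  linear_combination (-(p * (2 * p + #s)) * X k * sumSq s ^ (p - 1) * X m ^ (2 * q) -
    q * (2 * q - 1) * X k * sumSq s ^ p * X m ^ (2 * q - 2)) * hhalf
    - 4 * C (1 / 2 : K) * X k * sumSq s ^ (p - 1) * X m ^ (2 * q) * hp
    - C (1 / 2 : K) * X k * sumSq s ^ p * X m ^ (2 * q - 2) * hq

theorem fundamentalOperator_sum_antidiagonal_eq_zero (hm : m ∉ s) (hk : k ∈ s) (ν : K)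
    (a : ℕ → ℕ → K) (l : ℕ)
    (hrec : ∀ p q, p + q + 1 = l →
      a (p + 1) q * (p + 1) * (2 * ν - 2 * (p + 1) - #s) = a p (q + 1) * (q + 1) * (2 * q + 1)) :
    fundamentalOperator (insert m s) k ν
      (∑ x ∈ antidiagonal l, C (a x.1 x.2) * (sumSq s ^ x.1 * X m ^ (2 * x.2))) = 0 := by
  set u : ℕ → ℕ → MvPolynomial σ K := fun p q =>
    C (a p q * p * (2 * ν - 2 * p - #s)) * (sumSq s ^ (p - 1) * X m ^ (2 * q))
  set v : ℕ → ℕ → MvPolynomial σ K := fun p q =>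
    C (a p q * q * (2 * q - 1)) * (sumSq s ^ p * X m ^ (2 * q - 2))
  have hterm (p q : ℕ) : fundamentalOperator (insert m s) k ν
      (C (a p q) * (sumSq s ^ p * X m ^ (2 * q))) = X k * (u p q - v p q) := by
    rw [C_mul', map_smul, fundamentalOperator_sumSq_pow_mul_X_pow hm hk, smul_eq_C_mul]
    simp only [u, v, map_mul]
    ring
  rw [map_sum, sum_congr rfl fun x _ => hterm x.1 x.2, ← mul_sum,
    Finset.Nat.sum_antidiagonal_sub_eq_zero u v (by simp [u]) (by simp [v]), mul_zero]
  intro p q hpq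
  simp only [u, v, Nat.add_sub_cancel, show 2 * (q + 1) - 2 = 2 * q by omega]
  push_cast
  congr 2
  linear_combination hrec p q hpq

end FundamentalOperator

section Gegenbauer

variable {K : Type*} [Field K]

-- The coefficient of `v^p t^{2q}` in `C̃_{2(p+q)}^μ(-v, t)`.
noncomputable def gegenbauerCoeff (μ : K) (p q : ℕ) : K :=
  2 ^ (2 * q) / (p.factorial * (2 * q).factorial) * (ascPochhammer K q).eval (μ + p + q)

theorem gegenbauerCoeff_succ_left [CharZero K] (μ : K) (p q : ℕ) :
    gegenbauerCoeff μ (p + 1) q * (p + 1) * (2 * (μ + p + 2 * q + 1)) =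
      gegenbauerCoeff μ p (q + 1) * (q + 1) * (2 * q + 1) := by
  have harg : μ + ((p + 1 : ℕ) : K) + q = μ + p + ((q + 1 : ℕ) : K) := by push_cast; ring
  rw [gegenbauerCoeff, gegenbauerCoeff, harg, ascPochhammer_succ_eval, Nat.factorial_succ p,
    show 2 * (q + 1) = 2 * q + 1 + 1 by ring, Nat.factorial_succ (2 * q + 1),
    Nat.factorial_succ (2 * q)]
  push_cast
  have hp : (p : K) + 1 ≠ 0 := Nat.cast_add_one_ne_zero p
  have hq₁ : 2 * (q : K) + 1 ≠ 0 := by exact_mod_cast (2 * q).succ_ne_zero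
  have hq₂ : 2 * (q : K) + 1 + 1 ≠ 0 := by exact_mod_cast (2 * q + 1).succ_ne_zero
  have hpf : (p.factorial : K) ≠ 0 := Nat.cast_ne_zero.2 p.factorial_ne_zero
  have hqf : ((2 * q).factorial : K) ≠ 0 := Nat.cast_ne_zero.2 (2 * q).factorial_ne_zero
  simp only [div_mul_eq_mul_div]
  rw [div_eq_div_iff (by positivity) (by positivity)]
  ring

theorem sum_range_gegenbauer_eq_sum_antidiagonal (μ : K) (l : ℕ)
    (S t : MvPolynomial σ K) :
    ∑ j ∈ range (l + 1),
      C ((-1 : K) ^ j * 2 ^ (2 * l - 2 * j) / (j.factorial * (2 * l - 2 * j).factorial) *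
          (ascPochhammer K (l - j)).eval (μ + l)) * (-S) ^ j * t ^ (2 * l - 2 * j) =
      ∑ x ∈ antidiagonal l, C (gegenbauerCoeff μ x.1 x.2) * (S ^ x.1 * t ^ (2 * x.2)) := by
  rw [Finset.Nat.sum_antidiagonal_eq_sum_range_succ_mk]
  refine sum_congr rfl fun j hj => ?_
  have hjl : j ≤ l := Nat.lt_succ_iff.1 (mem_range.1 hj)
  have hsign : ((-1 : MvPolynomial σ K) ^ j) ^ 2 = 1 := by
    rw [← pow_mul, pow_mul', neg_one_sq, one_pow]
  dsimp only
  rw [gegenbauerCoeff, Nat.mul_sub, Nat.cast_sub hjl, show μ + j + ((l : K) - j) = μ + l by ring,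
    neg_pow S, mul_div_assoc]
  simp only [map_mul, map_pow, map_neg, map_one]
  linear_combination (C (2 ^ (2 * l - 2 * j) / (j.factorial * (2 * l - 2 * j).factorial) : K) *
    C ((ascPochhammer K (l - j)).eval (μ + l)) * S ^ j * t ^ (2 * l - 2 * j)) * hsign

end Gegenbauer

theorem Fin.mk_sub_one_notMem_map_castLEEmb {n : ℕ} (hn : 0 < n) :
    (⟨n - 1, Nat.sub_one_lt_of_lt hn⟩ : Fin n) ∉ univ.map (Fin.castLEEmb (Nat.sub_le n 1)) := by
  simpa [Fin.ext_iff] using fun i : Fin (n - 1) => i.isLt.ne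

theorem Fin.univ_eq_insert_map_castLEEmb {n : ℕ} (hn : 0 < n) :
    (univ : Finset (Fin n)) =
      insert ⟨n - 1, Nat.sub_one_lt_of_lt hn⟩ (univ.map (Fin.castLEEmb (Nat.sub_le n 1))) := by
  ext i
  simp only [mem_univ, mem_insert, mem_map, true_and, true_iff, Fin.ext_iff, Fin.coe_castLEEmb,
    Fin.val_castLE]
  by_cases h : (i : ℕ) < n - 1
  · exact Or.inr ⟨⟨i, h⟩, rfl⟩
  · exact Or.inl (by omega)

/-- The fundamental differential equations `(ν ∂/∂ζⱼ − ½ Δ_{ℝⁿ} ζⱼ)F = 0` of the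
F-method, satisfied by the Fourier symbol
`F = C̃_{2l}^μ(−(ζ₁²+⋯+ζ_{n−1}²), ζₙ)` of the conformally covariant operator
`C̃_{λ,ν}`, where `ν = λ + 2l`, `μ = λ − (n−1)/2`. -/
theorem fundamental_differential_equations (n : ℕ) (hn : 2 ≤ n) (lam : ℂ) (l : ℕ)
    (nu μ : ℂ) (hnu : nu = lam + 2 * (l : ℂ)) (hμ : μ = lam - ((n : ℂ) - 1) / 2)
    (F : MvPolynomial (Fin n) ℂ)
    (hF : F = ∑ j ∈ Finset.range (l + 1),
      C ((-1 : ℂ) ^ j * 2 ^ (2 * l - 2 * j) /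
            ((j.factorial : ℂ) * ((2 * l - 2 * j).factorial : ℂ)) *
          (ascPochhammer ℂ (l - j)).eval (μ + l)) *
        (-(∑ i : Fin (n - 1), X (Fin.castLE (Nat.sub_le n 1) i) ^ 2)) ^ j *
        X (⟨n - 1, by omega⟩ : Fin n) ^ (2 * l - 2 * j)) :
    ∀ j : Fin (n - 1),
      C nu * pderiv (Fin.castLE (Nat.sub_le n 1) j) F -
          C (1 / 2 : ℂ) *
            ∑ i : Fin n, pderiv i (pderiv i (X (Fin.castLE (Nat.sub_le n 1) j) * F)) = 0 := by
  intro j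
  set s : Finset (Fin n) := univ.map (Fin.castLEEmb (Nat.sub_le n 1))
  have hF' : F = ∑ x ∈ antidiagonal l, C (gegenbauerCoeff μ x.1 x.2) *
      (sumSq s ^ x.1 * X ⟨n - 1, by omega⟩ ^ (2 * x.2)) := by
    rw [hF, ← sum_range_gegenbauer_eq_sum_antidiagonal]
    simp [sumSq, s]
  rw [← laplacian_apply, Fin.univ_eq_insert_map_castLEEmb (by omega), ← fundamentalOperator_apply,
    hF']
  refine fundamentalOperator_sum_antidiagonal_eq_zero
    (Fin.mk_sub_one_notMem_map_castLEEmb (by omega)) (mem_map_of_mem _ (mem_univ j)) nu _ l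
    fun p q hpq => ?_
  subst hpq hnu hμ
  rw [card_map, card_univ, Fintype.card_fin, Nat.cast_sub (by omega)]
  push_cast
  linear_combination gegenbauerCoeff_succ_left (lam - ((n : ℂ) - 1) / 2) p q
end

section
/- Let n ≥ 1 and let f : ℝⁿ → ℂ be a Lebesgue integrable function with compact support. Then its Fourier–Laplace transform (F_c f)(ζ) = ∫_{ℝⁿ} f(x) · exp(Σ_{i=1}^{n} xᵢ ζᵢ) dx, viewed as a function of ζ = (ζ₁, …, ζₙ) ∈ ℂⁿ, is well defined (the integrand is integrable for each ζ) and is holomorphic on all of ℂⁿ, i.e. complex differentiable as a map ℂⁿ → ℂ. -/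
/-!
On the compact support of `f` the linear forms `ζ ↦ ⟨x, ζ⟩` are uniformly bounded, so for `ζ`
in a ball both the integrand `f x e^{⟨x, ζ⟩}` and its derivative `f x e^{⟨x, ζ⟩} ⟨x, ·⟩` are
dominated by a multiple of `‖f‖`. This gives integrability, and differentiation under the
integral sign gives complex differentiability.
-/

open MeasureTheory Metric Complex

theorem HasCompactSupport.aestronglyMeasurable_smul_of_continuous {α 𝕜 F : Type*}
    [TopologicalSpace α] [MeasurableSpace α] [OpensMeasurableSpace α] {μ : Measure α}
    [NormedField 𝕜] [NormedAddCommGroup F] [NormedSpace 𝕜 F] {f : α → 𝕜} {g : α → F}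
    (hsupp : HasCompactSupport f) (hf : AEStronglyMeasurable f μ) (hg : Continuous g) :
    AEStronglyMeasurable (fun x => f x • g x) μ := by
  have hK : MeasurableSet (tsupport f) := (isClosed_tsupport f).measurableSet
  have hfg : (fun x => f x • g x) = fun x => f x • (tsupport f).indicator g x := by
    ext x
    by_cases hx : x ∈ tsupport f
    · simp [hx]
    · simp [image_eq_zero_of_notMem_tsupport hx]
  rw [hfg]
  exact hf.smul <| (aestronglyMeasurable_indicator_iff hK).2 <|
    hg.continuousOn.aestronglyMeasurable_of_isCompact hsupp hK

theorem ContinuousLinearMap.norm_cexp_apply_le {E : Type*} [SeminormedAddCommGroup E]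
    [NormedSpace ℂ E] (ℓ : E →L[ℂ] ℂ) (z : E) : ‖cexp (ℓ z)‖ ≤ Real.exp (‖ℓ‖ * ‖z‖) :=
  (norm_exp_le_exp_norm _).trans (Real.exp_le_exp.2 (ℓ.le_opNorm z))

section

variable {α E : Type*} [TopologicalSpace α] [NormedAddCommGroup E] [NormedSpace ℂ E]
  {f : α → ℂ} {L : α → E →L[ℂ] ℂ}

theorem norm_mul_cexp_le {C r : ℝ} (hC : ∀ x ∈ tsupport f, ‖L x‖ ≤ C) {ζ : E} (hζ : ‖ζ‖ ≤ r)
    (x : α) : ‖f x * cexp (L x ζ)‖ ≤ Real.exp (C * r) * ‖f x‖ := by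
  by_cases hx : x ∈ tsupport f
  · have hC0 : 0 ≤ C := (norm_nonneg _).trans (hC x hx)
    rw [norm_mul, mul_comm]
    gcongr
    exact ((L x).norm_cexp_apply_le ζ).trans
      (Real.exp_le_exp.2 (mul_le_mul (hC x hx) hζ (norm_nonneg _) hC0))
  · simp [image_eq_zero_of_notMem_tsupport hx]

theorem norm_mul_cexp_smul_le {C r : ℝ} (hC : ∀ x ∈ tsupport f, ‖L x‖ ≤ C) {ζ : E}
    (hζ : ‖ζ‖ ≤ r) (x : α) :
    ‖(f x * cexp (L x ζ)) • L x‖ ≤ C * Real.exp (C * r) * ‖f x‖ := by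
  by_cases hx : x ∈ tsupport f
  · rw [norm_smul]
    exact (mul_le_mul (norm_mul_cexp_le hC hζ x) (hC x hx) (norm_nonneg _)
      (by positivity)).trans_eq (by ring)
  · simp [image_eq_zero_of_notMem_tsupport hx, zero_smul ℂ (L x)]

variable [MeasurableSpace α] [OpensMeasurableSpace α] {μ : Measure α}
variable (hf : Integrable f μ) (hsupp : HasCompactSupport f) (hL : Continuous L)
include hf hsupp hL

theorem integrable_mul_cexp_of_hasCompactSupport (ζ : E) :
    Integrable (fun x => f x * cexp (L x ζ)) μ := by
  obtain ⟨C, hC⟩ := hsupp.isCompact.exists_bound_of_continuousOn hL.continuousOn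
  refine (hf.norm.const_mul (Real.exp (C * ‖ζ‖))).mono' ?_
    (ae_of_all _ (norm_mul_cexp_le hC le_rfl))
  exact hf.aestronglyMeasurable.mul (Continuous.aestronglyMeasurable (by fun_prop))

theorem hasFDerivAt_integral_mul_cexp (ζ₀ : E) :
    HasFDerivAt (fun ζ => ∫ x, f x * cexp (L x ζ) ∂μ)
      (∫ x, (f x * cexp (L x ζ₀)) • L x ∂μ) ζ₀ := by
  obtain ⟨C, hC⟩ := hsupp.isCompact.exists_bound_of_continuousOn hL.continuousOn
  have hint := integrable_mul_cexp_of_hasCompactSupport hf hsupp hL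
  refine hasFDerivAt_integral_of_dominated_of_fderiv_le (ball_mem_nhds ζ₀ one_pos)
    (F' := fun ζ x => (f x * cexp (L x ζ)) • L x)
    (bound := fun x => C * Real.exp (C * (‖ζ₀‖ + 1)) * ‖f x‖)
    (.of_forall fun ζ => (hint ζ).aestronglyMeasurable) (hint ζ₀)
    (hsupp.mul_right.aestronglyMeasurable_smul_of_continuous (hint ζ₀).aestronglyMeasurable hL)
    (ae_of_all _ fun x ζ hζ => norm_mul_cexp_smul_le hC (norm_lt_of_mem_ball hζ).le x)
    (hf.norm.const_mul _) (ae_of_all _ fun x ζ _ => ?_)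
  simpa only [smul_smul] using ((L x).hasFDerivAt.cexp.const_mul (f x))

end

theorem fourier_laplace_entire_general (n : ℕ)
    (f : EuclideanSpace ℝ (Fin n) → ℂ)
    (hf : Integrable f volume) (hsupp : HasCompactSupport f) :
    (∀ ζ : EuclideanSpace ℂ (Fin n),
        Integrable (fun x : EuclideanSpace ℝ (Fin n) =>
          f x * Complex.exp (∑ i : Fin n, ((x i : ℝ) : ℂ) * ζ i)) volume) ∧
      Differentiable ℂ (fun ζ : EuclideanSpace ℂ (Fin n) =>
        ∫ x : EuclideanSpace ℝ (Fin n),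
          f x * Complex.exp (∑ i : Fin n, ((x i : ℝ) : ℂ) * ζ i)) := by
  let L : EuclideanSpace ℝ (Fin n) → EuclideanSpace ℂ (Fin n) →L[ℂ] ℂ :=
    fun x => ∑ i, (x i : ℂ) • EuclideanSpace.proj i
  have hL : Continuous L := by fun_prop
  have hL_apply (x : EuclideanSpace ℝ (Fin n)) (ζ : EuclideanSpace ℂ (Fin n)) :
      ∑ i, (x i : ℂ) * ζ i = L x ζ := by
    simp [L]
  simp only [hL_apply]
  exact ⟨integrable_mul_cexp_of_hasCompactSupport hf hsupp hL,
    fun ζ => (hasFDerivAt_integral_mul_cexp hf hsupp hL ζ).differentiableAt⟩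

/-- The Fourier–Laplace transform `(F_c f)(ζ) = ∫_{ℝⁿ} f(x) e^{⟨x,ζ⟩} dx` of a
compactly supported integrable function is well defined and holomorphic on all
of `ℂⁿ`. -/
theorem fourier_laplace_entire (n : ℕ) (hn : 1 ≤ n)
    (f : EuclideanSpace ℝ (Fin n) → ℂ)
    (hf : Integrable f volume) (hsupp : HasCompactSupport f) :
    (∀ ζ : EuclideanSpace ℂ (Fin n),
        Integrable (fun x : EuclideanSpace ℝ (Fin n) =>
          f x * Complex.exp (∑ i : Fin n, ((x i : ℝ) : ℂ) * ζ i)) volume) ∧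
      Differentiable ℂ (fun ζ : EuclideanSpace ℂ (Fin n) =>
        ∫ x : EuclideanSpace ℝ (Fin n),
          f x * Complex.exp (∑ i : Fin n, ((x i : ℝ) : ℂ) * ζ i)) :=
  fourier_laplace_entire_general n f hf hsupp
end
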